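/- arXiv:2312.05164 — 6 statements merged into one kernel-verified Lean document; each statement's English description precedes it below -/
import Mathlib

section
/- Let α₁, α₂ ∈ ℂ \ ℝ with {α₁, ᾱ₁} ∩ {α₂, ᾱ₂} = ∅, and let P₁, P₂ be n×n Hermitian projectors. Set φ = (α₂ - ᾱ₁)I + (ᾱ₂ - α₂)P₂ + (ᾱ₁ - α₁)P₁. Then φ is invertible. -/
open Matrix

lemma proj_dot_aux {n : ℕ} (P : Matrix (Fin n) (Fin n) ℂ) (hP : Pᴴ = P) (hP2 : P*P = P)
    (x : Fin n → ℂ) :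
    star x ⬝ᵥ (P *ᵥ x) = star (P *ᵥ x) ⬝ᵥ (P *ᵥ x) := by
  rw [star_mulVec, hP, ← dotProduct_mulVec, mulVec_mulVec, hP2]

lemma sum_normSq_zero {n : ℕ} (x : Fin n → ℂ) (h : ∑ i, Complex.normSq (x i) = 0) :
    x = 0 := by
  funext i
  exact Complex.normSq_eq_zero.mp
    ((Finset.sum_eq_zero_iff_of_nonneg (fun i _ => Complex.normSq_nonneg _)).mp h i
      (Finset.mem_univ i))

lemma dot_self_real {n : ℕ} (x : Fin n → ℂ) :
    star x ⬝ᵥ x = ((∑ i, Complex.normSq (x i) : ℝ) : ℂ) := by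
  push_cast
  simp [dotProduct, Complex.normSq_eq_conj_mul_self]

/-- The refactorization matrix
`φ = (α₂ - ᾱ₁) I + (ᾱ₂ - α₂) P₂ + (ᾱ₁ - α₁) P₁` is invertible under the genericity
condition `{α₁, ᾱ₁} ∩ {α₂, ᾱ₂} = ∅`. -/
theorem refactorization_matrix_isUnit {n : ℕ} (α₁ α₂ : ℂ)
    (hα₁ : α₁.im ≠ 0) (hα₂ : α₂.im ≠ 0)
    (hgen : ({α₁, star α₁} : Set ℂ) ∩ {α₂, star α₂} = ∅)
    (P₁ P₂ : Matrix (Fin n) (Fin n) ℂ)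
    (hP₁ : P₁ᴴ = P₁) (hP₁2 : P₁ * P₁ = P₁)
    (hP₂ : P₂ᴴ = P₂) (hP₂2 : P₂ * P₂ = P₂) :
    IsUnit ((α₂ - star α₁) • (1 : Matrix (Fin n) (Fin n) ℂ)
      + (star α₂ - α₂) • P₂ + (star α₁ - α₁) • P₁) := by
  -- genericity consequences
  have hne : ∀ a ∈ ({α₁, star α₁} : Set ℂ), ∀ b ∈ ({α₂, star α₂} : Set ℂ), a ≠ b := by
    intro a ha b hb h
    subst h
    exact Set.eq_empty_iff_forall_notMem.mp hgen a ⟨ha, hb⟩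
  have h12 : α₂ - α₁ ≠ 0 := sub_ne_zero.mpr
    (Ne.symm (hne α₁ (by simp) α₂ (by simp)))
  have h1s2 : α₂ - star α₁ ≠ 0 := sub_ne_zero.mpr
    (Ne.symm (hne (star α₁) (by simp) α₂ (by simp)))
  have h1s2s : star α₂ - star α₁ ≠ 0 := sub_ne_zero.mpr
    (Ne.symm (hne (star α₁) (by simp) (star α₂) (by simp)))
  rw [Matrix.isUnit_iff_isUnit_det, isUnit_iff_ne_zero]
  intro hdet
  obtain ⟨v, hv0, hv⟩ := Matrix.exists_mulVec_eq_zero_iff.mpr hdet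
  set w : Fin n → ℂ := P₁ *ᵥ v with hw
  set z : Fin n → ℂ := P₂ *ᵥ w with hz
  set u : Fin n → ℂ := w - z with hu
  -- expand the kernel equation
  have hv' : (α₂ - star α₁) • v + (star α₂ - α₂) • (P₂ *ᵥ v) + (star α₁ - α₁) • w = 0 := by
    simpa [add_mulVec, smul_mulVec, one_mulVec] using hv
  -- apply P₂
  have heq1 : (star α₂ - star α₁) • (P₂ *ᵥ v) + (star α₁ - α₁) • z = 0 := by
    have := congrArg (fun x => P₂ *ᵥ x) hv'
    simp only [mulVec_add, mulVec_smul, mulVec_mulVec, hP₂2, mulVec_zero] at this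
    rw [← this]
    module
  -- projections of w
  have hQ : (1 - P₂)ᴴ = 1 - P₂ := by simp [hP₂]
  have hQ2 : (1 - P₂) * (1 - P₂) = 1 - P₂ := by
    simp [Matrix.mul_sub, Matrix.sub_mul, hP₂2]
  have hu' : u = (1 - P₂) *ᵥ w := by simp [hu, hz, sub_mulVec, one_mulVec]
  -- real quantities
  set P : ℝ := ∑ i, Complex.normSq (u i) with hP
  set Q : ℝ := ∑ i, Complex.normSq (z i) with hQdef
  have hPnn : 0 ≤ P := Finset.sum_nonneg fun i _ => Complex.normSq_nonneg _
  have hQnn : 0 ≤ Q := Finset.sum_nonneg fun i _ => Complex.normSq_nonneg _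
  have hdz : star w ⬝ᵥ z = (Q : ℂ) := by
    rw [hz, proj_dot_aux P₂ hP₂ hP₂2, ← hz, dot_self_real]
  have hdu : star w ⬝ᵥ u = (P : ℂ) := by
    rw [hu', proj_dot_aux (1 - P₂) hQ hQ2, ← hu', dot_self_real]
  have hdw : star w ⬝ᵥ w = (P : ℂ) + (Q : ℂ) := by
    have : star w ⬝ᵥ w = star w ⬝ᵥ u + star w ⬝ᵥ z := by
      rw [← dotProduct_add]
      congr 1
      simp [hu]
    rw [this, hdu, hdz]
  have hdv : star w ⬝ᵥ v = (P : ℂ) + (Q : ℂ) := by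
    have h1 : star w ⬝ᵥ v = star v ⬝ᵥ w := by
      rw [hw, star_mulVec, hP₁, ← dotProduct_mulVec]
    have h2 : star w ⬝ᵥ w = star v ⬝ᵥ w := by
      rw [hw, ← proj_dot_aux P₁ hP₁ hP₁2]
    rw [h1, ← h2, hdw]
  -- scalar equations
  have E1 : (α₂ - star α₁) * ((P : ℂ) + Q) + (star α₂ - α₂) * (star w ⬝ᵥ (P₂ *ᵥ v))
      + (star α₁ - α₁) * ((P : ℂ) + Q) = 0 := by
    have := congrArg (fun x => star w ⬝ᵥ x) hv'
    simpa [dotProduct_add, dotProduct_smul, smul_eq_mul, hdv, hdw] using this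
  have E2 : (star α₂ - star α₁) * (star w ⬝ᵥ (P₂ *ᵥ v)) + (star α₁ - α₁) * (Q : ℂ) = 0 := by
    have := congrArg (fun x => star w ⬝ᵥ x) heq1
    simpa [dotProduct_add, dotProduct_smul, smul_eq_mul, hdz] using this
  -- combine to get positive-definite relation
  have hconj1 : (starRingEnd ℂ) (α₂ - α₁) = star α₂ - star α₁ := by simp [Complex.star_def]
  have hconj2 : (starRingEnd ℂ) (α₂ - star α₁) = star α₂ - α₁ := by
    simp [Complex.star_def]
  have key : ((Complex.normSq (α₂ - α₁) : ℂ)) * P + ((Complex.normSq (α₂ - star α₁) : ℂ)) * Q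
      = 0 := by
    rw [← Complex.mul_conj, ← Complex.mul_conj, hconj1, hconj2]
    linear_combination (star α₂ - star α₁) * E1 - (star α₂ - α₂) * E2
  have keyR : Complex.normSq (α₂ - α₁) * P + Complex.normSq (α₂ - star α₁) * Q = 0 := by
    exact_mod_cast key
  have hn1 : 0 < Complex.normSq (α₂ - α₁) := Complex.normSq_pos.mpr h12
  have hn2 : 0 < Complex.normSq (α₂ - star α₁) := Complex.normSq_pos.mpr h1s2
  have hP0 : P = 0 := by nlinarith
  have hQ0 : Q = 0 := by nlinarith
  -- hence w = 0
  have hz0 : z = 0 := sum_normSq_zero z (by rw [← hQdef]; exact hQ0)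
  have hu0 : u = 0 := sum_normSq_zero u (by rw [← hP]; exact hP0)
  have hw0 : w = 0 := by
    have : w = u + z := by simp [hu]
    rw [this, hu0, hz0, add_zero]
  -- hence P₂ *ᵥ v = 0 and then v = 0
  have hp2v : P₂ *ᵥ v = 0 := by
    have := heq1
    rw [hz0, smul_zero, add_zero, smul_eq_zero] at this
    exact this.resolve_left h1s2s
  have : (α₂ - star α₁) • v = 0 := by
    have := hv'
    rw [hp2v, hw0, smul_zero, smul_zero, add_zero, add_zero] at this
    exact this
  rw [smul_eq_zero] at this
  exact hv0 (this.resolve_left h1s2)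
end

section
/- Let α₁, α₂ ∈ ℂ \ ℝ with {α₁, ᾱ₁} ∩ {α₂, ᾱ₂} = ∅, P₁, P₂ Hermitian projectors, φ = (α₂ - ᾱ₁)I + (ᾱ₂ - α₂)P₂ + (ᾱ₁ - α₁)P₁, and define P̃ᵢ = φ Pᵢ φ⁻¹ for i = 1, 2. Then P̃₁ and P̃₂ are Hermitian projectors, i.e., P̃ᵢ² = P̃ᵢ and P̃ᵢ* = P̃ᵢ. -/
open Matrix

section Aux

open ComplexOrder

private lemma aux_dot_sq {n : ℕ} (B : Matrix (Fin n) (Fin n) ℂ) (hB : Bᴴ = B)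
    (x : Fin n → ℂ) :
    star x ⬝ᵥ ((B * B) *ᵥ x) = star (B *ᵥ x) ⬝ᵥ (B *ᵥ x) := by
  rw [← mulVec_mulVec, dotProduct_mulVec, star_mulVec, hB]

private lemma aux_sum_zero {n : ℕ} (c₁ c₂ : ℂ) (hc₁ : c₁ ≠ 0) (hc₂ : c₂ ≠ 0)
    (u w : Fin n → ℂ)
    (h : (c₁ * star c₁) * (star u ⬝ᵥ u) + (c₂ * star c₂) * (star w ⬝ᵥ w) = 0) :
    u = 0 ∧ w = 0 := by
  have e₁ : c₁ * star c₁ = (Complex.normSq c₁ : ℂ) := by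
    rw [Complex.star_def, Complex.mul_conj]
  have e₂ : c₂ * star c₂ = (Complex.normSq c₂ : ℂ) := by
    rw [Complex.star_def, Complex.mul_conj]
  rw [e₁, e₂] at h
  have h₁ : (0:ℂ) ≤ (Complex.normSq c₁ : ℂ) * (star u ⬝ᵥ u) :=
    mul_nonneg (by exact_mod_cast Complex.normSq_nonneg c₁) (dotProduct_star_self_nonneg u)
  have h₂ : (0:ℂ) ≤ (Complex.normSq c₂ : ℂ) * (star w ⬝ᵥ w) :=
    mul_nonneg (by exact_mod_cast Complex.normSq_nonneg c₂) (dotProduct_star_self_nonneg w)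
  obtain ⟨hz₁, hz₂⟩ := (add_eq_zero_iff_of_nonneg h₁ h₂).mp h
  have hn₁ : (Complex.normSq c₁ : ℂ) ≠ 0 :=
    Complex.ofReal_ne_zero.mpr (fun h => hc₁ (Complex.normSq_eq_zero.mp h))
  have hn₂ : (Complex.normSq c₂ : ℂ) ≠ 0 :=
    Complex.ofReal_ne_zero.mpr (fun h => hc₂ (Complex.normSq_eq_zero.mp h))
  constructor
  · exact dotProduct_star_self_eq_zero.mp ((mul_eq_zero.mp hz₁).resolve_left hn₁)
  · exact dotProduct_star_self_eq_zero.mp ((mul_eq_zero.mp hz₂).resolve_left hn₂)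

end Aux

/-- With `φ = (α₂ - ᾱ₁) I + (ᾱ₂ - α₂) P₂ + (ᾱ₁ - α₁) P₁`, the matrices
`P̃ᵢ = φ Pᵢ φ⁻¹` (for `i = 1, 2`) are again Hermitian projectors:
`P̃ᵢ² = P̃ᵢ` and `P̃ᵢ* = P̃ᵢ`. -/
theorem refactorized_projectors_hermitian_idempotent {n : ℕ} (α₁ α₂ : ℂ)
    (hα₁ : α₁.im ≠ 0) (hα₂ : α₂.im ≠ 0)
    (hgen : ({α₁, star α₁} : Set ℂ) ∩ {α₂, star α₂} = ∅)
    (P₁ P₂ : Matrix (Fin n) (Fin n) ℂ)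
    (hP₁ : P₁ᴴ = P₁) (hP₁2 : P₁ * P₁ = P₁)
    (hP₂ : P₂ᴴ = P₂) (hP₂2 : P₂ * P₂ = P₂)
    (φ : Matrix (Fin n) (Fin n) ℂ)
    (hφ : φ = (α₂ - star α₁) • (1 : Matrix (Fin n) (Fin n) ℂ)
      + (star α₂ - α₂) • P₂ + (star α₁ - α₁) • P₁) :
    ((φ * P₁ * φ⁻¹) * (φ * P₁ * φ⁻¹) = φ * P₁ * φ⁻¹ ∧
      (φ * P₁ * φ⁻¹)ᴴ = φ * P₁ * φ⁻¹) ∧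
    ((φ * P₂ * φ⁻¹) * (φ * P₂ * φ⁻¹) = φ * P₂ * φ⁻¹ ∧
      (φ * P₂ * φ⁻¹)ᴴ = φ * P₂ * φ⁻¹) := by
  -- genericity consequences
  have hmem := Set.eq_empty_iff_forall_notMem.mp hgen
  have hg1 : star α₁ ≠ α₂ := by
    have := hmem (star α₁); simp at this; tauto
  have hg2 : α₁ ≠ α₂ := by
    have := hmem α₁; simp at this; tauto
  have ha : α₂ - star α₁ ≠ 0 := sub_ne_zero.mpr (Ne.symm hg1)
  have hd : α₂ - α₁ ≠ 0 := sub_ne_zero.mpr (Ne.symm hg2)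
  -- basic product facts
  have h1 : P₁ * (P₁ * P₂) = P₁ * P₂ := by rw [← mul_assoc, hP₁2]
  have h2 : P₂ * (P₂ * P₁) = P₂ * P₁ := by rw [← mul_assoc, hP₂2]
  have hBher : (1 - P₁ - P₂)ᴴ = (1 - P₁ - P₂) := by
    simp [conjTranspose_sub, hP₁, hP₂]
  have hDher : (P₁ - P₂)ᴴ = (P₁ - P₂) := by
    simp [conjTranspose_sub, hP₁, hP₂]
  have hBD : (1 - P₁ - P₂) * (1 - P₁ - P₂) + (P₁ - P₂) * (P₁ - P₂) = 1 := by
    noncomm_ring [hP₁2, hP₂2, h1, h2]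
  -- the key algebraic identity for φᴴ * φ
  have hM : φᴴ * φ = ((α₂ - star α₁) * star (α₂ - star α₁)) • 1
      + ((star α₂ - α₂) * (star α₁ - α₁)) • ((P₁ - P₂) * (P₁ - P₂)) := by
    subst hφ
    simp only [conjTranspose_add, conjTranspose_smul, conjTranspose_one, hP₁, hP₂,
      star_sub, star_star, add_mul, mul_add, smul_mul_assoc, mul_smul_comm, smul_smul,
      one_mul, mul_one, sub_mul, mul_sub, hP₁2, hP₂2, h1, h2]
    match_scalars <;> ring
  have hM' : φᴴ * φ = ((α₂ - star α₁) * star (α₂ - star α₁)) • ((1 - P₁ - P₂) * (1 - P₁ - P₂))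
      + ((α₂ - α₁) * star (α₂ - α₁)) • ((P₁ - P₂) * (P₁ - P₂)) := by
    rw [hM, show (1 - P₁ - P₂) * (1 - P₁ - P₂) = 1 - (P₁ - P₂) * (P₁ - P₂) from
      eq_sub_of_add_eq hBD]
    simp only [star_sub, star_star, smul_sub]
    match_scalars <;> ring
  -- invertibility of φ
  have hdet : φ.det ≠ 0 := by
    intro h0
    have hdetM : (φᴴ * φ).det = 0 := by rw [det_mul, h0, mul_zero]
    obtain ⟨v, hv, hMv⟩ := exists_mulVec_eq_zero_iff.mpr hdetM
    have key : ((α₂ - star α₁) * star (α₂ - star α₁)) *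
          (star ((1 - P₁ - P₂) *ᵥ v) ⬝ᵥ ((1 - P₁ - P₂) *ᵥ v))
        + ((α₂ - α₁) * star (α₂ - α₁)) * (star ((P₁ - P₂) *ᵥ v) ⬝ᵥ ((P₁ - P₂) *ᵥ v)) = 0 := by
      have : star v ⬝ᵥ ((φᴴ * φ) *ᵥ v) = 0 := by rw [hMv, dotProduct_zero]
      rw [hM', add_mulVec, smul_mulVec, smul_mulVec, dotProduct_add,
        dotProduct_smul, dotProduct_smul, smul_eq_mul, smul_eq_mul,
        aux_dot_sq _ hBher, aux_dot_sq _ hDher] at this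
      exact this
    obtain ⟨hu, hw⟩ := aux_sum_zero _ _ ha hd _ _ key
    apply hv
    calc v = ((1 - P₁ - P₂) * (1 - P₁ - P₂) + (P₁ - P₂) * (P₁ - P₂)) *ᵥ v := by
          rw [hBD, one_mulVec]
      _ = (1 - P₁ - P₂) *ᵥ ((1 - P₁ - P₂) *ᵥ v) + (P₁ - P₂) *ᵥ ((P₁ - P₂) *ᵥ v) := by
          rw [add_mulVec, mulVec_mulVec, mulVec_mulVec]
      _ = 0 := by rw [hu, hw, mulVec_zero, mulVec_zero, add_zero]
  have hu : IsUnit φ.det := isUnit_iff_ne_zero.mpr hdet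
  have huH : IsUnit φᴴ.det := by
    rw [det_conjTranspose]; exact isUnit_iff_ne_zero.mpr (star_ne_zero.mpr hdet)
  have hinv : φ * φ⁻¹ = 1 := mul_nonsing_inv φ hu
  have hinv' : φ⁻¹ * φ = 1 := nonsing_inv_mul φ hu
  -- φᴴφ commutes with P₁ and P₂
  have hcomm1 : (φᴴ * φ) * P₁ = P₁ * (φᴴ * φ) := by
    rw [hM]; noncomm_ring [hP₁2, hP₂2, h1, h2]
  have hcomm2 : (φᴴ * φ) * P₂ = P₂ * (φᴴ * φ) := by
    rw [hM]; noncomm_ring [hP₁2, hP₂2, h1, h2]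
  -- the generic argument
  have main : ∀ P : Matrix (Fin n) (Fin n) ℂ, Pᴴ = P → P * P = P →
      (φᴴ * φ) * P = P * (φᴴ * φ) →
      ((φ * P * φ⁻¹) * (φ * P * φ⁻¹) = φ * P * φ⁻¹ ∧ (φ * P * φ⁻¹)ᴴ = φ * P * φ⁻¹) := by
    intro P hP hP2 hcomm
    constructor
    · calc φ * P * φ⁻¹ * (φ * P * φ⁻¹) = φ * P * (φ⁻¹ * φ) * P * φ⁻¹ := by noncomm_ring
        _ = φ * P * 1 * P * φ⁻¹ := by rw [hinv']
        _ = φ * (P * P) * φ⁻¹ := by noncomm_ring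
        _ = φ * P * φ⁻¹ := by rw [hP2]
    · rw [conjTranspose_mul, conjTranspose_mul, hP, conjTranspose_nonsing_inv]
      calc φᴴ⁻¹ * (P * φᴴ)
          = φᴴ⁻¹ * (P * (φᴴ * φ)) * φ⁻¹ := by
            rw [show φᴴ⁻¹ * (P * (φᴴ * φ)) * φ⁻¹ = φᴴ⁻¹ * (P * φᴴ) * (φ * φ⁻¹) from by
              noncomm_ring, hinv, mul_one]
        _ = φᴴ⁻¹ * ((φᴴ * φ) * P) * φ⁻¹ := by rw [← hcomm]
        _ = (φᴴ⁻¹ * φᴴ) * (φ * P * φ⁻¹) := by noncomm_ring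
        _ = φ * P * φ⁻¹ := by rw [nonsing_inv_mul _ huH, one_mul]
  exact ⟨main P₁ hP₁ hP₁2 hcomm1, main P₂ hP₂ hP₂2 hcomm2⟩
end

section
/- Let U be a Hermitian unitary n×n matrix and α ∈ ℂ \ (ℝ ∪ iℝ). The matrix φ = 2αI + (ᾱ - α)(P + UPU*) is invertible for every Hermitian projector P. -/
/-!
`φ = 2α • 1 + (ᾱ - α) • H` with `H = P + U P Uᴴ` Hermitian and `ᾱ - α` purely imaginary.
If `φ v = 0`, pairing with `v` gives `2α ‖v‖² + (ᾱ - α) ⟪v, H v⟫ = 0` with both brackets real,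
so the real part `2 (Re α) ‖v‖²` vanishes and `v = 0`.
-/

open Matrix

open scoped ComplexOrder

theorem Matrix.IsHermitian.isUnit_smul_one_add_smul {n : Type*} [Fintype n] [DecidableEq n]
    {A : Matrix n n ℂ} (hA : A.IsHermitian) {a b : ℂ} (ha : a.re ≠ 0) (hb : b.re = 0) :
    IsUnit (a • (1 : Matrix n n ℂ) + b • A) := by
  rw [isUnit_iff_isUnit_det, isUnit_iff_ne_zero]
  intro hdet
  obtain ⟨v, hv, hker⟩ := exists_mulVec_eq_zero_iff.mpr hdet
  have hself : (star v ⬝ᵥ v).im = 0 := by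
    simpa using isHermitian_one.im_star_dotProduct_mulVec_self v
  have hform : (star v ⬝ᵥ A *ᵥ v).im = 0 := hA.im_star_dotProduct_mulVec_self v
  have hpair : a * (star v ⬝ᵥ v) + b * (star v ⬝ᵥ A *ᵥ v) = 0 := by
    simpa [add_mulVec, smul_mulVec, dotProduct_add, dotProduct_smul] using
      congrArg (star v ⬝ᵥ ·) hker
  have hre : a.re * (star v ⬝ᵥ v).re = 0 := by
    simpa [hself, hform, hb] using congrArg Complex.re hpair
  have hnorm : star v ⬝ᵥ v = 0 :=
    Complex.ext ((mul_eq_zero.mp hre).resolve_left ha) hself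
  exact hv (dotProduct_star_self_eq_zero.mp hnorm)

theorem phi_isUnit_general {n : ℕ} (U : Matrix (Fin n) (Fin n) ℂ)
    (α : ℂ) (hre : α.re ≠ 0)
    (P : Matrix (Fin n) (Fin n) ℂ) (hP : Pᴴ = P) :
    IsUnit ((2 * α) • (1 : Matrix (Fin n) (Fin n) ℂ)
      + (star α - α) • (P + U * P * Uᴴ)) := by
  have hHerm : (P + U * P * Uᴴ).IsHermitian :=
    IsHermitian.add hP (isHermitian_mul_mul_conjTranspose U hP)
  exact hHerm.isUnit_smul_one_add_smul (by simpa using hre) (by simp)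

/-- For `U` Hermitian unitary and `α` neither real nor purely imaginary, the matrix
`φ = 2αI + (ᾱ-α)(P + UPU*)` is invertible for every Hermitian projector `P`. -/
theorem phi_isUnit {n : ℕ} (U : Matrix (Fin n) (Fin n) ℂ)
    (hUnit : Uᴴ * U = 1) (hHerm : Uᴴ = U)
    (α : ℂ) (hre : α.re ≠ 0) (him : α.im ≠ 0)
    (P : Matrix (Fin n) (Fin n) ℂ) (hP : Pᴴ = P) (hP2 : P * P = P) :
    IsUnit ((2 * α) • (1 : Matrix (Fin n) (Fin n) ℂ)
      + (star α - α) • (P + U * P * Uᴴ)) :=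
  phi_isUnit_general U α hre P hP
end

section
/- Let U be a Hermitian unitary matrix, α ∈ ℂ \ (ℝ ∪ iℝ), P a Hermitian projector, and φ = 2αI + (ᾱ - α)(P + UPU*). Then B(α)(P) := UφPφ⁻¹U* is again a Hermitian projector with the same trace (rank) as P. -/
open Matrix

open ComplexOrder in
private theorem aux_det_ne_zero {n : ℕ} (c : ℝ) (hc : 0 < c)
    (A : Matrix (Fin n) (Fin n) ℂ) :
    ((c : ℂ) • (1 : Matrix (Fin n) (Fin n) ℂ) + Aᴴ * A).det ≠ 0 := by
  have h1 : ((c : ℂ) • (1 : Matrix (Fin n) (Fin n) ℂ)).PosDef := by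
    have hd : (c : ℂ) • (1 : Matrix (Fin n) (Fin n) ℂ)
        = diagonal (fun _ => (c : ℂ)) := by
      ext i j
      by_cases h : i = j
      · simp [h]
      · simp [Matrix.one_apply_ne h, Matrix.diagonal_apply_ne _ h]
    rw [hd]
    exact .diagonal fun i => by exact_mod_cast hc
  exact (h1.add_posSemidef (posSemidef_conjTranspose_mul_self A)).det_pos.ne'

/-- The parametric reflection map at the level of projectors:
`B(α)(P) = U φ P φ⁻¹ U*` with `φ = 2αI + (ᾱ-α)(P + UPU*)`. -/
noncomputable def Bmap {n : ℕ} (U : Matrix (Fin n) (Fin n) ℂ) (α : ℂ)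
    (P : Matrix (Fin n) (Fin n) ℂ) : Matrix (Fin n) (Fin n) ℂ :=
  let φ : Matrix (Fin n) (Fin n) ℂ :=
    (2 * α) • 1 + (star α - α) • (P + U * P * Uᴴ)
  U * (φ * P * φ⁻¹) * Uᴴ

/-- `B(α)(P)` is again a Hermitian projector, with the same trace as `P`. -/
theorem Bmap_hermitian_projector_trace {n : ℕ} (U : Matrix (Fin n) (Fin n) ℂ)
    (hUnit : Uᴴ * U = 1) (hHerm : Uᴴ = U)
    (α : ℂ) (hre : α.re ≠ 0) (him : α.im ≠ 0)
    (P : Matrix (Fin n) (Fin n) ℂ) (hP : Pᴴ = P) (hP2 : P * P = P) :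
    (Bmap U α P)ᴴ = Bmap U α P ∧ Bmap U α P * Bmap U α P = Bmap U α P ∧
      (Bmap U α P).trace = P.trace := by
  set Q : Matrix (Fin n) (Fin n) ℂ := U * P * Uᴴ with hQdef
  set S : Matrix (Fin n) (Fin n) ℂ := P + Q with hSdef
  set φ : Matrix (Fin n) (Fin n) ℂ := (2 * α) • 1 + (star α - α) • S with hφdef
  have hB : Bmap U α P = U * (φ * P * φ⁻¹) * Uᴴ := rfl
  have hQH : Qᴴ = Q := by
    rw [hQdef]
    simp [conjTranspose_mul, hP, Matrix.mul_assoc]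
  have hQ2 : Q * Q = Q := by
    rw [hQdef]
    calc U * P * Uᴴ * (U * P * Uᴴ) = U * P * (Uᴴ * U) * P * Uᴴ := by
          noncomm_ring
      _ = U * (P * P) * Uᴴ := by rw [hUnit]; noncomm_ring
      _ = U * P * Uᴴ := by rw [hP2]
  have hSH : Sᴴ = S := by rw [hSdef]; simp [hP, hQH]
  have hS2 : S * S = S + (P * Q + Q * P) := by
    rw [hSdef]
    simp only [add_mul, mul_add, hP2, hQ2]
    abel
  set T : Matrix (Fin n) (Fin n) ℂ := P * Q + Q * P with hTdef
  set r : ℂ := (α.re : ℂ) with hr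
  set m : ℂ := (α.im : ℂ) with hm
  have hφH : φᴴ = (2 * star α) • 1 + (α - star α) • S := by
    rw [hφdef]
    simp [conjTranspose_smul, hSH, star_sub]
  -- scalar facts
  have hc1 : star α * α = r ^ 2 + m ^ 2 := by
    rw [Complex.star_def, mul_comm, Complex.mul_conj, Complex.normSq_apply]
    push_cast [hr, hm]
    ring
  have hc2 : (α - star α) ^ 2 = -(4 * m ^ 2) := by
    rw [hm, Complex.star_def, Complex.sub_conj, mul_pow, Complex.I_sq]
    push_cast
    ring
  have hmstar : star m = m := by rw [hm]; exact Complex.conj_ofReal _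
  -- the key identity for φᴴ φ
  have hN : (1 - S) * (1 - S) = 1 - S + T := by
    simp only [sub_mul, mul_sub, one_mul, mul_one]
    rw [hS2]
    abel
  have hK : φᴴ * φ = (4 * r ^ 2) • (1 : Matrix (Fin n) (Fin n) ℂ)
      + (4 * m ^ 2) • ((1 - S) * (1 - S)) := by
    rw [hφH, hφdef, hN]
    have expand : ((2 * star α) • (1 : Matrix (Fin n) (Fin n) ℂ) + (α - star α) • S)
        * ((2 * α) • 1 + (star α - α) • S)
        = (4 * (star α * α)) • 1 + (2 * (α - star α) ^ 2) • S
          + (-((α - star α) ^ 2)) • (S * S) := by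
      simp only [add_mul, mul_add, smul_mul_assoc, mul_smul_comm, smul_smul,
        one_mul, mul_one]
      module
    rw [expand, hS2, hc1, hc2]
    module
  -- invertibility of φ
  have hdetK : (φᴴ * φ).det ≠ 0 := by
    have hform : φᴴ * φ = ((4 * α.re ^ 2 : ℝ) : ℂ) • (1 : Matrix (Fin n) (Fin n) ℂ)
        + ((2 * m) • (1 - S))ᴴ * ((2 * m) • (1 - S)) := by
      rw [hK]
      congr 1
      · congr 1
        push_cast [hr]
        ring
      · rw [conjTranspose_smul]
        simp only [conjTranspose_sub, conjTranspose_one, hSH]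
        rw [smul_mul_assoc, mul_smul_comm, smul_smul]
        congr 1
        rw [star_mul', hmstar, show (star (2 : ℂ)) = 2 by simp]
        ring
    rw [hform]
    exact aux_det_ne_zero _ (by positivity) _
  have hdet : IsUnit φ.det := by
    refine isUnit_iff_ne_zero.mpr (right_ne_zero_of_mul (a := φᴴ.det) ?_)
    rw [← det_mul]
    exact hdetK
  have hdetH : IsUnit φᴴ.det := by
    refine isUnit_iff_ne_zero.mpr (left_ne_zero_of_mul (b := φ.det) ?_)
    rw [← det_mul]
    exact hdetK
  have hinv1 : φ * φ⁻¹ = 1 := mul_nonsing_inv φ hdet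
  have hinv2 : φ⁻¹ * φ = 1 := nonsing_inv_mul φ hdet
  have hinvH2 : (φᴴ)⁻¹ * φᴴ = 1 := nonsing_inv_mul _ hdetH
  -- P commutes with φᴴ φ
  have hPS : P * S = P + P * Q := by rw [hSdef, mul_add, hP2]
  have hSP : S * P = P + Q * P := by rw [hSdef, add_mul, hP2]
  have e1 : P * T = P * Q + P * Q * P := by
    rw [hTdef, mul_add, ← Matrix.mul_assoc P P Q, hP2, ← Matrix.mul_assoc P Q P]
  have e2 : T * P = P * Q * P + Q * P := by
    rw [hTdef, add_mul, Matrix.mul_assoc Q P P, hP2]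
  have hcommN : P * (1 - S + T) = (1 - S + T) * P := by
    have l1 : P * (1 - S + T) = P * Q * P := by
      rw [mul_add, mul_sub, mul_one, hPS, e1]
      abel
    have l2 : (1 - S + T) * P = P * Q * P := by
      rw [add_mul, sub_mul, one_mul, hSP, e2]
      abel
    rw [l1, l2]
  have hcomm : P * (φᴴ * φ) = (φᴴ * φ) * P := by
    rw [hK, hN, mul_add, add_mul, mul_smul_comm, mul_smul_comm, smul_mul_assoc,
      smul_mul_assoc, mul_one, one_mul, hcommN]
  -- Hermitian conjugate formula
  have hBH : (Bmap U α P)ᴴ = U * ((φᴴ)⁻¹ * P * φᴴ) * Uᴴ := by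
    rw [hB]
    simp only [conjTranspose_mul, conjTranspose_nonsing_inv, hP,
      conjTranspose_conjTranspose]
    rw [hHerm]
    noncomm_ring
  have step : φᴴ * (φ * P * φ⁻¹) = P * φᴴ := by
    calc φᴴ * (φ * P * φ⁻¹) = (φᴴ * φ) * P * φ⁻¹ := by
          simp only [Matrix.mul_assoc]
      _ = P * ((φᴴ * φ) * φ⁻¹) := by rw [← hcomm]; simp only [Matrix.mul_assoc]
      _ = P * (φᴴ * (φ * φ⁻¹)) := by rw [Matrix.mul_assoc]
      _ = P * φᴴ := by rw [hinv1, Matrix.mul_one]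
  have hkey : (φᴴ)⁻¹ * P * φᴴ = φ * P * φ⁻¹ := by
    calc (φᴴ)⁻¹ * P * φᴴ = (φᴴ)⁻¹ * (P * φᴴ) := by rw [Matrix.mul_assoc]
      _ = (φᴴ)⁻¹ * (φᴴ * (φ * P * φ⁻¹)) := by rw [step]
      _ = ((φᴴ)⁻¹ * φᴴ) * (φ * P * φ⁻¹) := by simp only [← Matrix.mul_assoc]
      _ = φ * P * φ⁻¹ := by rw [hinvH2, Matrix.one_mul]
  refine ⟨?_, ?_, ?_⟩
  · rw [hBH, hkey, hB]
  · rw [hB]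
    calc U * (φ * P * φ⁻¹) * Uᴴ * (U * (φ * P * φ⁻¹) * Uᴴ)
        = U * (φ * P * ((φ⁻¹ * (Uᴴ * U) * φ) * (P * φ⁻¹))) * Uᴴ := by
          noncomm_ring
      _ = U * (φ * P * (P * φ⁻¹)) * Uᴴ := by
          rw [hUnit, Matrix.mul_one, hinv2, Matrix.one_mul]
      _ = U * (φ * (P * P) * φ⁻¹) * Uᴴ := by noncomm_ring
      _ = U * (φ * P * φ⁻¹) * Uᴴ := by rw [hP2]
  · rw [hB, trace_mul_cycle, ← Matrix.mul_assoc, hUnit, Matrix.one_mul,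
      trace_mul_cycle, hinv2, Matrix.one_mul]
end

section
/- Let U be a Hermitian unitary matrix, α ∈ ℂ \ (ℝ ∪ iℝ), P a Hermitian projector, and let (P̃₁, P̃₂) solve the refactorization g_{−ᾱ,UPU*} g_{α,P} = g_{α,P̃₂} g_{−ᾱ,P̃₁}. Then P̃₁ = U P̃₂ U*. -/
open Matrix

/-- If `(P̃₁, P̃₂)` solves the refactorization
`g_{-ᾱ,UPU*} g_{α,P} = g_{α,P̃₂} g_{-ᾱ,P̃₁}`, i.e. `P̃₂ = φPφ⁻¹` and
`P̃₁ = φ(UPU*)φ⁻¹` with `φ = 2αI + (ᾱ-α)(P + UPU*)`, then `P̃₁ = U P̃₂ U*`. -/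
theorem refactorized_pair_symmetry {n : ℕ} (U : Matrix (Fin n) (Fin n) ℂ)
    (hUnit : Uᴴ * U = 1) (hHerm : Uᴴ = U)
    (α : ℂ) (hre : α.re ≠ 0) (him : α.im ≠ 0)
    (P : Matrix (Fin n) (Fin n) ℂ) (hP : Pᴴ = P) (hP2 : P * P = P)
    (φ P₁ P₂ : Matrix (Fin n) (Fin n) ℂ)
    (hφ : φ = (2 * α) • (1 : Matrix (Fin n) (Fin n) ℂ)
      + (star α - α) • (P + U * P * Uᴴ))
    (hP₂' : P₂ = φ * P * φ⁻¹)
    (hP₁' : P₁ = φ * (U * P * Uᴴ) * φ⁻¹) :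
    P₁ = U * P₂ * Uᴴ := by
  have hU2 : U * U = 1 := by rw [← hUnit, hHerm]
  -- U commutes with φ
  have hcomm : U * φ = φ * U := by
    have h1 : U * (U * P * U) = P * U := by
      rw [show U * (U * P * U) = (U * U) * P * U by noncomm_ring, hU2, Matrix.one_mul]
    have h2 : (U * P * U) * U = U * P := by
      rw [show (U * P * U) * U = U * P * (U * U) by noncomm_ring, hU2, Matrix.mul_one]
    have key : U * (P + U * P * U) = (P + U * P * U) * U := by
      rw [Matrix.mul_add, Matrix.add_mul, h1, h2, add_comm]
    subst hφ
    rw [hHerm]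
    simp only [Matrix.mul_add, Matrix.add_mul, Matrix.mul_smul, Matrix.smul_mul,
      Matrix.mul_one, Matrix.one_mul, key]
  -- hence UφU = φ
  have hUφU : U * φ * U = φ := by
    rw [hcomm, Matrix.mul_assoc, hU2, Matrix.mul_one]
  -- adjugate of U
  have hadjU : U.adjugate = U.det • U := by
    have h := Matrix.mul_adjugate U
    have := congrArg (fun M => U * M) h
    simp only [← Matrix.mul_assoc, hU2, Matrix.one_mul, Matrix.mul_smul,
      Matrix.mul_one] at this
    exact this
  have hdetU2 : U.det * U.det = 1 := by
    rw [← Matrix.det_mul, hU2, Matrix.det_one]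
  -- U commutes with adjugate φ
  have hadjcomm : U * φ.adjugate = φ.adjugate * U := by
    have h : φ.adjugate = U * φ.adjugate * U := by
      conv_lhs => rw [← hUφU]
      rw [Matrix.adjugate_mul_distrib, Matrix.adjugate_mul_distrib, hadjU]
      simp only [Matrix.smul_mul, Matrix.mul_smul, smul_smul, hdetU2, one_smul]
      noncomm_ring
    calc U * φ.adjugate = U * (U * φ.adjugate * U) := by rw [← h]
      _ = (U * U) * φ.adjugate * U := by noncomm_ring
      _ = φ.adjugate * U := by rw [hU2, Matrix.one_mul]
  -- U commutes with φ⁻¹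
  have hinvcomm : U * φ⁻¹ = φ⁻¹ * U := by
    rw [Matrix.inv_def, Matrix.mul_smul, Matrix.smul_mul, hadjcomm]
  rw [hP₁', hP₂', hHerm]
  calc φ * (U * P * U) * φ⁻¹
      = U * U * φ * (U * P * U) * φ⁻¹ := by rw [hU2, Matrix.one_mul]
    _ = U * (φ * P * φ⁻¹) * U := by
        rw [show U * U * φ * (U * P * U) * φ⁻¹
            = U * ((U * φ * U) * P * (U * φ⁻¹)) by noncomm_ring,
          hUφU, hinvcomm]
        noncomm_ring
end

section
/- Let P be a Hermitian projector, X, Y anti-Hermitian matrices, and U Hermitian unitary. If i·tr(UPU*[UXU*, UYU*]) + i·tr(P[X,Y]) = 0 for all anti-Hermitian Y, then [X,P] = 0. (Equivalently: the pullback of ω_{E_k} ⊕ ω_{E_k} to the graph {(UPU*, P)} is nondegenerate.) -/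
open Matrix

lemma trace_conjTranspose_mul_self_eq_zero' {n : ℕ}
    (A : Matrix (Fin n) (Fin n) ℂ) (h : (Aᴴ * A).trace = 0) : A = 0 := by
  have key : ∑ i, ∑ j, Complex.normSq (A j i) = 0 := by
    simp only [Matrix.trace, Matrix.diag, Matrix.mul_apply,
      Matrix.conjTranspose_apply] at h
    have h2 : (↑(∑ i, ∑ j, Complex.normSq (A j i)) : ℂ) = 0 := by
      rw [← h]
      push_cast
      congr 1; ext i; congr 1; ext j
      rw [Complex.normSq_eq_conj_mul_self]; rfl
    exact_mod_cast h2
  ext i j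
  have h1 := (Finset.sum_eq_zero_iff_of_nonneg (fun i _ =>
    Finset.sum_nonneg fun j _ => Complex.normSq_nonneg _)).mp key j (Finset.mem_univ j)
  have h2 := (Finset.sum_eq_zero_iff_of_nonneg (fun k _ =>
    Complex.normSq_nonneg (A k j))).mp h1 i (Finset.mem_univ i)
  simpa using Complex.normSq_eq_zero.mp h2

/-- Nondegeneracy of the pulled-back form on the graph `{(UPU*, P)}`:
if `i·tr(UPU*[UXU*,UYU*]) + i·tr(P[X,Y]) = 0` for all anti-Hermitian `Y`,
then `[X,P] = 0`. -/
theorem graph_form_nondegenerate {n : ℕ}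
    (U : Matrix (Fin n) (Fin n) ℂ) (hUnit : Uᴴ * U = 1) (hHerm : Uᴴ = U)
    (P : Matrix (Fin n) (Fin n) ℂ) (hP : Pᴴ = P) (hP2 : P * P = P)
    (X : Matrix (Fin n) (Fin n) ℂ) (hX : Xᴴ = -X)
    (h : ∀ Y : Matrix (Fin n) (Fin n) ℂ, Yᴴ = -Y →
      Complex.I * ((U * P * Uᴴ) *
          ((U * X * Uᴴ) * (U * Y * Uᴴ) - (U * Y * Uᴴ) * (U * X * Uᴴ))).trace
        + Complex.I * (P * (X * Y - Y * X)).trace = 0) :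
    X * P - P * X = 0 := by
  set A := X * P - P * X with hA
  have hAH : Aᴴ = A := by
    simp only [hA, Matrix.conjTranspose_sub, Matrix.conjTranspose_mul, hP, hX,
      mul_neg, neg_mul]
    abel
  set Y := Complex.I • A with hY
  have hYskew : Yᴴ = -Y := by
    simp [hY, hAH, Complex.star_def, Complex.conj_I, neg_smul]
  have hkey := h Y hYskew
  have hc : ∀ M N : Matrix (Fin n) (Fin n) ℂ,
      (U * M * Uᴴ) * (U * N * Uᴴ) = U * (M * N) * Uᴴ := by
    intro M N
    calc (U * M * Uᴴ) * (U * N * Uᴴ) = U * M * (Uᴴ * U) * (N * Uᴴ) := by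
          simp [Matrix.mul_assoc]
      _ = U * (M * N) * Uᴴ := by rw [hUnit]; simp [Matrix.mul_assoc]
  have htr : ∀ M : Matrix (Fin n) (Fin n) ℂ, (U * M * Uᴴ).trace = M.trace := by
    intro M
    rw [Matrix.trace_mul_cycle, hUnit, Matrix.one_mul]
  have hconj : ((U * P * Uᴴ) *
      ((U * X * Uᴴ) * (U * Y * Uᴴ) - (U * Y * Uᴴ) * (U * X * Uᴴ))).trace
      = (P * (X * Y - Y * X)).trace := by
    rw [hc, hc, show U * (X*Y) * Uᴴ - U * (Y*X) * Uᴴ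
      = U * (X*Y - Y*X) * Uᴴ by simp [Matrix.mul_sub, Matrix.sub_mul], hc, htr]
  rw [hconj] at hkey
  -- hkey : I * tr + I * tr = 0  ⇒ tr(P(XY-YX)) = 0
  have htr0 : (P * (X * Y - Y * X)).trace = 0 := by
    have : (2 * Complex.I) * (P * (X * Y - Y * X)).trace = 0 := by
      rw [two_mul, add_mul]; linear_combination hkey
    have h2I : (2 * Complex.I) ≠ 0 := by
      simp [Complex.I_ne_zero]
    exact (mul_eq_zero.mp this).resolve_left h2I
  -- tr(P(XY-YX)) = tr((PX - XP) Y) = tr(-A Y)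
  have htrA : (Aᴴ * A).trace = 0 := by
    have e : (P * (X * Y - Y * X)).trace = ((P * X - X * P) * Y).trace := by
      rw [Matrix.mul_sub, Matrix.sub_mul, Matrix.trace_sub, Matrix.trace_sub,
        ← Matrix.mul_assoc, ← Matrix.mul_assoc, Matrix.trace_mul_comm (P * Y) X]
      simp [Matrix.mul_assoc]
    have e2 : ((P * X - X * P) * Y).trace = -Complex.I * (A * A).trace := by
      rw [hY, Matrix.mul_smul, Matrix.trace_smul, show P * X - X * P = -A by
        simp [hA], Matrix.neg_mul, Matrix.trace_neg]
      simp [mul_comm]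
    rw [hAH]
    rw [e, e2] at htr0
    rcases mul_eq_zero.mp htr0 with h' | h'
    · exact absurd h' (by simp [Complex.I_ne_zero])
    · exact h'
  have := trace_conjTranspose_mul_self_eq_zero' A htrA
  simpa [hA] using this
end
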